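/- arXiv:1907.04777 — 2 statements merged into one kernel-verified Lean document; each statement's English description precedes it below -/
import Mathlib

section
/- Let t : C → A be a twisting cochain, 𝔞 an ideal of A, and h : C → A an 𝔞-trivial twisting cochain homotopy from t to another twisting cochain t̃. If C is cocomplete, then δ_h : C ⊗_{t̃} A → C ⊗_t A is an isomorphism of complexes (with inverse δ_{h^{-1}}), and δ_h is congruent to the identity map modulo C ⊗ 𝔞. -/
/-!
STATEMENT 3: If `h` is an `𝔞`-trivial twisting cochain homotopy from `t` to `t'`
and `C` is cocomplete, then `δ_h : C ⊗_{t'} A → C ⊗_t A` is an isomorphism of complexes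
(with inverse `δ_{h⁻¹}`), congruent to the identity modulo `C ⊗ 𝔞`.  The differential of
the twisted tensor product `C ⊗_t A` is `d⊗ - δ_t`; the tensor-product differential `d⊗`
is encoded abstractly by the chain-map property of `f ↦ δ_f` applied to the
degree-zero map `h`.
-/

open TensorProduct

noncomputable section

/-- The data of a coaugmented differential graded coalgebra on `C`. -/
structure DgcData (k C : Type) [CommRing k] [AddCommGroup C] [Module k C] where
  Δ : C →ₗ[k] C ⊗[k] C
  ε : C →ₗ[k] k
  η : k →ₗ[k] C
  d : C →ₗ[k] C
  coassoc : (TensorProduct.assoc k C C C).toLinearMap ∘ₗ (LinearMap.rTensor C Δ) ∘ₗ Δ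
      = (LinearMap.lTensor C Δ) ∘ₗ Δ
  counit_left : ∀ c : C, (LinearMap.rTensor C ε) (Δ c) = (1 : k) ⊗ₜ[k] c
  counit_right : ∀ c : C, (LinearMap.lTensor C ε) (Δ c) = c ⊗ₜ[k] (1 : k)
  ε_η : ε (η 1) = 1
  Δ_η : Δ (η 1) = η 1 ⊗ₜ[k] η 1
  d_sq : ∀ c, d (d c) = 0
  ε_d : ∀ c, ε (d c) = 0
  d_η : d (η 1) = 0

/-- The data of an augmented differential graded algebra on `A`. -/
structure DgaData (k A : Type) [CommRing k] [Ring A] [Algebra k A] where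
  d : A →ₗ[k] A
  ε : A →ₗ[k] k
  d_sq : ∀ a, d (d a) = 0
  d_one : d 1 = 0
  ε_one : ε 1 = 1
  ε_mul : ∀ a b, ε (a * b) = ε a * ε b
  ε_d : ∀ a, ε (d a) = 0

/-- `n`-fold tensor power of `C` over `k` (as a bundled `k`-module). -/
def tpowM (k C : Type) [CommRing k] [AddCommGroup C] [Module k C] : ℕ → ModuleCat k
  | 0 => ModuleCat.of k k
  | n + 1 => ModuleCat.of k (C ⊗[k] (tpowM k C n))

variable {k C A : Type} [CommRing k] [AddCommGroup C] [Module k C] [Ring A] [Algebra k A]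

/-- The iterated diagonal `Δ^{[n]} : C → C^{⊗n}` (with `Δ^{[0]} = ε`). -/
def iterDiag (Δ : C →ₗ[k] C ⊗[k] C) (ε : C →ₗ[k] k) : ∀ n, C →ₗ[k] tpowM k C n
  | 0 => ε
  | n + 1 => (LinearMap.lTensor C (iterDiag Δ ε n)).comp Δ

/-- The `n`-fold tensor power of the reduction map `1_C - η ε : C → C`. -/
def redPow (ε : C →ₗ[k] k) (η : k →ₗ[k] C) : ∀ n, tpowM k C n →ₗ[k] tpowM k C n
  | 0 => LinearMap.id
  | n + 1 => TensorProduct.map (LinearMap.id - η ∘ₗ ε) (redPow ε η n)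

/-- Cocompleteness: for every `c ∈ C` some reduced iterated diagonal
`(1-ηε)^{⊗n} Δ^{[n]}(c)` vanishes. -/
def Cocomplete (SC : DgcData k C) : Prop :=
  ∀ c : C, ∃ n, redPow SC.ε SC.η n (iterDiag SC.Δ SC.ε n c) = 0

/-- The cup product `f ∪ g = μ_A (f ⊗ g) Δ_C` on `Hom(C, A)`. -/
def cup (Δ : C →ₗ[k] C ⊗[k] C) (f g : C →ₗ[k] A) : C →ₗ[k] A :=
  (LinearMap.mul' k A) ∘ₗ (TensorProduct.map f g) ∘ₗ Δ

/-- The unit `η_A ε_C` of the cup-product algebra `Hom(C, A)`. -/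
def unitHom (ε : C →ₗ[k] k) : C →ₗ[k] A := (Algebra.linearMap k A) ∘ₗ ε

/-- Cup powers `f^{∪n}` (with `f^{∪0}` the unit `η_A ε_C`). -/
def cupPow (Δ : C →ₗ[k] C ⊗[k] C) (ε : C →ₗ[k] k) (f : C →ₗ[k] A) : ℕ → (C →ₗ[k] A)
  | 0 => unitHom ε
  | n + 1 => cup Δ f (cupPow Δ ε f n)

/-- A twisting cochain: `d(t) = t ∪ t` with the normalizations `ε_A t = 0`, `t η_C = 0`. -/
def IsTwCochain (SC : DgcData k C) (SA : DgaData k A) (t : C →ₗ[k] A) : Prop :=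
  SA.d ∘ₗ t + t ∘ₗ SC.d = cup SC.Δ t t ∧ SA.ε ∘ₗ t = 0 ∧ t (SC.η 1) = 0

/-- A twisting cochain homotopy `h : t ≃ u`: a degree-zero map with
`d(h) = t ∪ h - h ∪ u` and the normalizations `ε_A h = ε_C`, `h η_C = η_A`. -/
def IsTwHomotopy (SC : DgcData k C) (SA : DgaData k A) (t u h : C →ₗ[k] A) : Prop :=
  SA.d ∘ₗ h - h ∘ₗ SC.d = cup SC.Δ t h - cup SC.Δ h u
    ∧ SA.ε ∘ₗ h = SC.ε ∧ h (SC.η 1) = 1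

/-- `δ_f = (1_C ⊗ μ_A)(1_C ⊗ f ⊗ 1_A)(Δ_C ⊗ 1_A) : C ⊗ A → C ⊗ A`. -/
def deltaOp (Δ : C →ₗ[k] C ⊗[k] C) (f : C →ₗ[k] A) : C ⊗[k] A →ₗ[k] C ⊗[k] A :=
  (LinearMap.lTensor C (LinearMap.mul' k A)) ∘ₗ
  (LinearMap.lTensor C (LinearMap.rTensor A f)) ∘ₗ
  (TensorProduct.assoc k C C A).toLinearMap ∘ₗ
  (LinearMap.rTensor A Δ)

section Aux

open LinearMap TensorProduct

variable (Δc : C →ₗ[k] C ⊗[k] C) (εc : C →ₗ[k] k) (ηc : k →ₗ[k] C)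

private lemma tmap_sub_left {A' : Type} [AddCommGroup A'] [Module k A']
    (f f' : C →ₗ[k] A) (g : C →ₗ[k] A') :
    TensorProduct.map (f - f') g = TensorProduct.map f g - TensorProduct.map f' g := by
  rw [← rTensor_comp_lTensor, ← rTensor_comp_lTensor, ← rTensor_comp_lTensor,
    rTensor_sub, LinearMap.sub_comp]

private lemma tmap_sub_right {A' : Type} [AddCommGroup A'] [Module k A']
    (f : C →ₗ[k] A') (g g' : C →ₗ[k] A) :
    TensorProduct.map f (g - g') = TensorProduct.map f g - TensorProduct.map f g' := by
  rw [← lTensor_comp_rTensor, ← lTensor_comp_rTensor, ← lTensor_comp_rTensor,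
    lTensor_sub, LinearMap.sub_comp]

private lemma cup_sub_left (f f' g : C →ₗ[k] A) :
    cup Δc (f - f') g = cup Δc f g - cup Δc f' g := by
  unfold cup
  rw [tmap_sub_left, LinearMap.sub_comp, LinearMap.comp_sub]

private lemma cup_sub_right (f g g' : C →ₗ[k] A) :
    cup Δc f (g - g') = cup Δc f g - cup Δc f g' := by
  unfold cup
  rw [tmap_sub_right, LinearMap.sub_comp, LinearMap.comp_sub]

private lemma cup_unit_left
    (hcl : ∀ c, rTensor C εc (Δc c) = (1:k) ⊗ₜ[k] c) (f : C →ₗ[k] A) :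
    cup Δc (unitHom εc) f = f := by
  ext c
  have h1 : (TensorProduct.map (unitHom (k := k) (C := C) (A := A) εc) f)
      = (TensorProduct.map (Algebra.linearMap k A) f) ∘ₗ rTensor C εc := by
    rw [map_comp_rTensor]; rfl
  have h2 := DFunLike.congr_fun h1 (Δc c)
  simp only [LinearMap.comp_apply] at h2
  simp [cup, h2, hcl c]

private lemma cup_unit_right
    (hcr : ∀ c, lTensor C εc (Δc c) = c ⊗ₜ[k] (1:k)) (f : C →ₗ[k] A) :
    cup Δc f (unitHom εc) = f := by
  ext c
  have h1 : (TensorProduct.map f (unitHom (k := k) (C := C) (A := A) εc))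
      = (TensorProduct.map f (Algebra.linearMap k A)) ∘ₗ lTensor C εc := by
    rw [map_comp_lTensor]; rfl
  have h2 := DFunLike.congr_fun h1 (Δc c)
  simp only [LinearMap.comp_apply] at h2
  simp [cup, h2, hcr c]

private lemma cup_assoc
    (hco : (TensorProduct.assoc k C C C).toLinearMap ∘ₗ (rTensor C Δc) ∘ₗ Δc
      = (lTensor C Δc) ∘ₗ Δc)
    (f g e : C →ₗ[k] A) :
    cup Δc (cup Δc f g) e = cup Δc f (cup Δc g e) := by
  ext c
  have e1 : ∀ u : C ⊗[k] C,
      TensorProduct.map (LinearMap.mul' k A ∘ₗ TensorProduct.map f g) e (rTensor C Δc u)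
        = TensorProduct.map (cup Δc f g) e u := by
    intro u
    rw [← LinearMap.comp_apply, map_comp_rTensor]; rfl
  have e2 : ∀ u : C ⊗[k] C,
      TensorProduct.map f (LinearMap.mul' k A ∘ₗ TensorProduct.map g e) (lTensor C Δc u)
        = TensorProduct.map f (cup Δc g e) u := by
    intro u
    rw [← LinearMap.comp_apply, map_comp_lTensor]; rfl
  have E : LinearMap.mul' k A ∘ₗ TensorProduct.map (LinearMap.mul' k A ∘ₗ TensorProduct.map f g) e
      = (LinearMap.mul' k A ∘ₗ TensorProduct.map f (LinearMap.mul' k A ∘ₗ TensorProduct.map g e))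
        ∘ₗ (TensorProduct.assoc k C C C).toLinearMap := by
    apply TensorProduct.ext_threefold
    intro x y z
    simp [mul_assoc]
  have E' := fun w => DFunLike.congr_fun E w
  simp only [LinearMap.comp_apply, LinearEquiv.coe_coe] at E'
  have hco' := DFunLike.congr_fun hco c
  simp only [LinearMap.comp_apply, LinearEquiv.coe_coe] at hco'
  show LinearMap.mul' k A (TensorProduct.map (cup Δc f g) e (Δc c))
      = LinearMap.mul' k A (TensorProduct.map f (cup Δc g e) (Δc c))
  rw [← e1, ← e2, ← hco', E']

end Aux

section Aux2

open LinearMap TensorProduct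

variable (Δc : C →ₗ[k] C ⊗[k] C) (εc : C →ₗ[k] k)

private lemma deltaOp_tmul (f : C →ₗ[k] A) (c : C) (a : A) :
    deltaOp Δc f (c ⊗ₜ[k] a)
      = lTensor C (LinearMap.mul' k A ∘ₗ rTensor A f)
          ((TensorProduct.assoc k C C A) (Δc c ⊗ₜ[k] a)) := by
  simp [deltaOp, lTensor_comp]

private lemma deltaOp_sub (f g : C →ₗ[k] A) :
    deltaOp Δc (f - g) = deltaOp Δc f - deltaOp Δc g := by
  simp only [deltaOp, rTensor_sub, lTensor_sub, LinearMap.sub_comp, LinearMap.comp_sub]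

private lemma deltaOp_unit
    (hcr : ∀ c, lTensor C εc (Δc c) = c ⊗ₜ[k] (1:k)) :
    deltaOp Δc (unitHom (A := A) εc) = LinearMap.id := by
  apply TensorProduct.ext'
  intro c a
  rw [deltaOp_tmul]
  have key : lTensor C (LinearMap.mul' k A ∘ₗ rTensor A (unitHom (A := A) εc))
        ∘ₗ (TensorProduct.assoc k C C A).toLinearMap
        ∘ₗ ((TensorProduct.mk k (C ⊗[k] C) A).flip a)
      = lTensor C ((LinearMap.mulRight k a) ∘ₗ Algebra.linearMap k A) ∘ₗ lTensor C εc := by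
    apply TensorProduct.ext'
    intro x y
    simp [unitHom, mul_comm]
  have key' := DFunLike.congr_fun key (Δc c)
  simp only [LinearMap.comp_apply, LinearEquiv.coe_coe, LinearMap.flip_apply,
    TensorProduct.mk_apply] at key'
  rw [key', hcr c]
  simp

private lemma deltaOp_comp
    (hco : (TensorProduct.assoc k C C C).toLinearMap ∘ₗ (rTensor C Δc) ∘ₗ Δc
      = (lTensor C Δc) ∘ₗ Δc)
    (f g : C →ₗ[k] A) :
    deltaOp Δc (cup Δc f g) = deltaOp Δc f ∘ₗ deltaOp Δc g := by
  apply TensorProduct.ext'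
  intro c a
  have hco' := DFunLike.congr_fun hco c
  simp only [LinearMap.comp_apply, LinearEquiv.coe_coe] at hco'
  -- RHS
  have L12 : deltaOp Δc f
        ∘ₗ lTensor C (LinearMap.mul' k A ∘ₗ rTensor A g)
        ∘ₗ (TensorProduct.assoc k C C A).toLinearMap
        ∘ₗ ((TensorProduct.mk k (C ⊗[k] C) A).flip a)
      = lTensor C (LinearMap.mul' k A ∘ₗ TensorProduct.map f ((LinearMap.mulRight k a) ∘ₗ g))
        ∘ₗ (TensorProduct.assoc k C C C).toLinearMap
        ∘ₗ rTensor C Δc := by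
    apply TensorProduct.ext'
    intro x y
    simp only [LinearMap.comp_apply, LinearEquiv.coe_coe, LinearMap.flip_apply,
      TensorProduct.mk_apply, TensorProduct.assoc_tmul, LinearMap.lTensor_tmul,
      LinearMap.rTensor_tmul, LinearMap.mul'_apply]
    rw [deltaOp_tmul]
    have inner : lTensor C (LinearMap.mul' k A ∘ₗ rTensor A f)
          ∘ₗ (TensorProduct.assoc k C C A).toLinearMap
          ∘ₗ ((TensorProduct.mk k (C ⊗[k] C) A).flip (g y * a))
        = lTensor C (LinearMap.mul' k A ∘ₗ TensorProduct.map f ((LinearMap.mulRight k a) ∘ₗ g))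
          ∘ₗ (TensorProduct.assoc k C C C).toLinearMap
          ∘ₗ ((TensorProduct.mk k (C ⊗[k] C) C).flip y) := by
      apply TensorProduct.ext'
      intro p q
      simp [mul_assoc]
    have inner' := DFunLike.congr_fun inner (Δc x)
    simp only [LinearMap.comp_apply, LinearEquiv.coe_coe, LinearMap.flip_apply,
      TensorProduct.mk_apply] at inner'
    exact inner'
  have L12' := DFunLike.congr_fun L12 (Δc c)
  simp only [LinearMap.comp_apply, LinearEquiv.coe_coe, LinearMap.flip_apply,
    TensorProduct.mk_apply] at L12'
  -- LHS
  have R12 : lTensor C (LinearMap.mul' k A ∘ₗ rTensor A (cup Δc f g))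
        ∘ₗ (TensorProduct.assoc k C C A).toLinearMap
        ∘ₗ ((TensorProduct.mk k (C ⊗[k] C) A).flip a)
      = lTensor C (LinearMap.mul' k A ∘ₗ TensorProduct.map f ((LinearMap.mulRight k a) ∘ₗ g))
        ∘ₗ lTensor C Δc := by
    apply TensorProduct.ext'
    intro x y
    simp only [LinearMap.comp_apply, LinearEquiv.coe_coe, LinearMap.flip_apply,
      TensorProduct.mk_apply, TensorProduct.assoc_tmul, LinearMap.lTensor_tmul,
      LinearMap.rTensor_tmul, LinearMap.mul'_apply]
    show x ⊗ₜ[k] ((LinearMap.mul' k A) (TensorProduct.map f g (Δc y)) * a)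
        = x ⊗ₜ[k] (LinearMap.mul' k A) ((TensorProduct.map f ((LinearMap.mulRight k a) ∘ₗ g)) (Δc y))
    have inner2 : (LinearMap.mulRight k a) ∘ₗ LinearMap.mul' k A ∘ₗ TensorProduct.map f g
        = LinearMap.mul' k A ∘ₗ TensorProduct.map f ((LinearMap.mulRight k a) ∘ₗ g) := by
      apply TensorProduct.ext'
      intro p q
      simp [mul_assoc]
    have inner2' := DFunLike.congr_fun inner2 (Δc y)
    simp only [LinearMap.comp_apply, LinearMap.mulRight_apply] at inner2'
    rw [inner2']
  have R12' := DFunLike.congr_fun R12 (Δc c)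
  simp only [LinearMap.comp_apply, LinearEquiv.coe_coe, LinearMap.flip_apply,
    TensorProduct.mk_apply] at R12'
  calc deltaOp Δc (cup Δc f g) (c ⊗ₜ[k] a)
      = lTensor C (LinearMap.mul' k A ∘ₗ rTensor A (cup Δc f g))
          ((TensorProduct.assoc k C C A) (Δc c ⊗ₜ[k] a)) := deltaOp_tmul _ _ _ _
    _ = lTensor C (LinearMap.mul' k A ∘ₗ TensorProduct.map f ((LinearMap.mulRight k a) ∘ₗ g))
          (lTensor C Δc (Δc c)) := R12'
    _ = lTensor C (LinearMap.mul' k A ∘ₗ TensorProduct.map f ((LinearMap.mulRight k a) ∘ₗ g))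
          ((TensorProduct.assoc k C C C) (rTensor C Δc (Δc c))) := by rw [hco']
    _ = deltaOp Δc f (lTensor C (LinearMap.mul' k A ∘ₗ rTensor A g)
          ((TensorProduct.assoc k C C A) (Δc c ⊗ₜ[k] a))) := L12'.symm
    _ = (deltaOp Δc f ∘ₗ deltaOp Δc g) (c ⊗ₜ[k] a) := by
          rw [LinearMap.comp_apply, deltaOp_tmul]

end Aux2

section Aux3

open LinearMap TensorProduct

/-- `μ^{(n)} ∘ r^{⊗ n} : C^{⊗n} → A`, the multiplication used in cup powers. -/
private def powAux (r : C →ₗ[k] A) : ∀ n, tpowM k C n →ₗ[k] A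
  | 0 => Algebra.linearMap k A
  | n + 1 => LinearMap.mul' k A ∘ₗ TensorProduct.map r (powAux r n)

variable (Δc : C →ₗ[k] C ⊗[k] C) (εc : C →ₗ[k] k) (ηc : k →ₗ[k] C)

private lemma red_idem (hεη : εc (ηc 1) = 1) :
    (LinearMap.id - ηc ∘ₗ εc) ∘ₗ (LinearMap.id - ηc ∘ₗ εc) = LinearMap.id - ηc ∘ₗ εc := by
  ext c
  have h1 : ηc (εc c) = εc c • ηc 1 := by rw [← map_smul, smul_eq_mul, mul_one]
  simp only [LinearMap.comp_apply, LinearMap.sub_apply, LinearMap.id_apply, map_sub, h1,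
    map_smul, hεη]
  simp

private lemma redPow_idem (hεη : εc (ηc 1) = 1) :
    ∀ n, redPow εc ηc n ∘ₗ redPow εc ηc n = redPow εc ηc n
  | 0 => by simp [redPow]
  | n + 1 => by
    show TensorProduct.map _ _ ∘ₗ TensorProduct.map _ _ = _
    rw [← TensorProduct.map_comp, red_idem εc ηc hεη, redPow_idem hεη n]
    rfl

private lemma cupPow_factor (r : C →ₗ[k] A) (hr : r ∘ₗ (ηc ∘ₗ εc) = 0) :
    ∀ n, cupPow Δc εc r n = powAux r n ∘ₗ redPow εc ηc n ∘ₗ iterDiag Δc εc n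
  | 0 => by
    show unitHom εc = _
    simp [unitHom, powAux, redPow, iterDiag]
    rfl
  | n + 1 => by
    have hrr : r ∘ₗ (LinearMap.id - ηc ∘ₗ εc) = r := by
      rw [LinearMap.comp_sub, LinearMap.comp_id, hr, sub_zero]
    have key : TensorProduct.map r (powAux r n)
          ∘ₗ TensorProduct.map (LinearMap.id - ηc ∘ₗ εc) (redPow εc ηc n)
          ∘ₗ lTensor C (iterDiag Δc εc n)
        = TensorProduct.map r (cupPow Δc εc r n) := by
      rw [← LinearMap.comp_assoc, ← TensorProduct.map_comp, hrr, map_comp_lTensor,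
        LinearMap.comp_assoc, ← cupPow_factor r hr n]
    show cup Δc r (cupPow Δc εc r n) = _
    ext c
    have key' := DFunLike.congr_fun key (Δc c)
    simp only [LinearMap.comp_apply] at key'
    show LinearMap.mul' k A (TensorProduct.map r (cupPow Δc εc r n) (Δc c)) = _
    rw [← key']
    rfl

private lemma assoc_lTensor {X Y : Type} [AddCommGroup X] [Module k X]
    [AddCommGroup Y] [Module k Y] (φ : X →ₗ[k] Y) :
    (TensorProduct.assoc k C C Y).toLinearMap ∘ₗ lTensor (C ⊗[k] C) φ
      = lTensor C (lTensor C φ) ∘ₗ (TensorProduct.assoc k C C X).toLinearMap := by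
  apply TensorProduct.ext_threefold
  intro x y z
  simp

private lemma iterDiag_succ_succ
    (hco : (TensorProduct.assoc k C C C).toLinearMap ∘ₗ (rTensor C Δc) ∘ₗ Δc
      = (lTensor C Δc) ∘ₗ Δc) (n : ℕ) (c : C) :
    iterDiag Δc εc (n + 2) c
      = (TensorProduct.assoc k C C (tpowM k C n))
          (rTensor (tpowM k C n) Δc (iterDiag Δc εc (n + 1) c)) := by
  have hco' := DFunLike.congr_fun hco c
  simp only [LinearMap.comp_apply, LinearEquiv.coe_coe] at hco'
  have h1 : rTensor (tpowM k C n) Δc (lTensor C (iterDiag Δc εc n) (Δc c))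
      = lTensor (C ⊗[k] C) (iterDiag Δc εc n) (rTensor C Δc (Δc c)) := by
    have ha := DFunLike.congr_fun (rTensor_comp_lTensor (R := k) (f := Δc) (g := iterDiag Δc εc n)) (Δc c)
    have hb := DFunLike.congr_fun (lTensor_comp_rTensor (R := k) (f := Δc) (g := iterDiag Δc εc n)) (Δc c)
    simp only [LinearMap.comp_apply] at ha hb
    exact ha.trans hb.symm
  have h2 := DFunLike.congr_fun
    (assoc_lTensor (C := C) (k := k) (iterDiag Δc εc n)) (rTensor C Δc (Δc c))
  simp only [LinearMap.comp_apply, LinearEquiv.coe_coe] at h2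
  calc @id (C ⊗[k] (C ⊗[k] tpowM k C n)) (iterDiag Δc εc (n + 2) c)
      = @id (C ⊗[k] (C ⊗[k] tpowM k C n)) (lTensor C (iterDiag Δc εc (n+1)) (Δc c)) := rfl
    _ = lTensor C (lTensor C (iterDiag Δc εc n)) (lTensor C Δc (Δc c)) := by
        have e0 := DFunLike.congr_fun
          (lTensor_comp (M := C) (g := lTensor C (iterDiag Δc εc n)) (f := Δc)) (Δc c)
        simp only [LinearMap.comp_apply] at e0
        exact e0
    _ = lTensor C (lTensor C (iterDiag Δc εc n))
          ((TensorProduct.assoc k C C C) (rTensor C Δc (Δc c))) := by rw [hco']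
    _ = (TensorProduct.assoc k C C (tpowM k C n))
          (lTensor (C ⊗[k] C) (iterDiag Δc εc n) (rTensor C Δc (Δc c))) := h2.symm
    _ = (TensorProduct.assoc k C C (tpowM k C n))
          (rTensor (tpowM k C n) Δc (lTensor C (iterDiag Δc εc n) (Δc c))) := by rw [h1]
    _ = _ := rfl

private lemma Q_mono
    (hco : (TensorProduct.assoc k C C C).toLinearMap ∘ₗ (rTensor C Δc) ∘ₗ Δc
      = (lTensor C Δc) ∘ₗ Δc)
    (hεη : εc (ηc 1) = 1) (hΔη : Δc (ηc 1) = ηc 1 ⊗ₜ[k] ηc 1)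
    (n : ℕ) (c : C)
    (hz : redPow εc ηc (n+1) (iterDiag Δc εc (n+1) c) = 0) :
    redPow εc ηc (n+2) (iterDiag Δc εc (n+2) c) = 0 := by
  set red := LinearMap.id - ηc ∘ₗ εc with hred
  set D := TensorProduct.map red red ∘ₗ Δc with hD
  have h2 : D (ηc 1) = 0 := by
    have : red (ηc 1) = 0 := by
      simp [hred, LinearMap.sub_apply, hεη]
    simp only [hD, LinearMap.comp_apply, hΔη, TensorProduct.map_tmul]
    rw [this, TensorProduct.zero_tmul]
  have hDred : D ∘ₗ red = D := by
    ext x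
    have h1 : ηc (εc x) = εc x • ηc 1 := by rw [← map_smul, smul_eq_mul, mul_one]
    simp only [LinearMap.comp_apply, hred, LinearMap.sub_apply, LinearMap.id_apply, map_sub, h1,
      map_smul]
    rw [h2, smul_zero, sub_zero]
  set Q1 := iterDiag Δc εc (n+1) c with hQ1
  have e1 := TensorProduct.map_map_comp_assoc_eq (R := k) red red (redPow εc ηc n)
  have e1' := DFunLike.congr_fun e1 (rTensor (tpowM k C n) Δc Q1)
  simp only [LinearMap.comp_apply, LinearEquiv.coe_coe] at e1'
  have v2 : TensorProduct.map (TensorProduct.map red red) (redPow εc ηc n)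
        (rTensor (tpowM k C n) Δc Q1)
      = TensorProduct.map D (redPow εc ηc n) Q1 := by
    exact DFunLike.congr_fun (map_comp_rTensor (f := map red red) (g := redPow εc ηc n) (f' := Δc)) Q1
  have e3 : TensorProduct.map D (redPow εc ηc n)
      = TensorProduct.map D (redPow εc ηc n) ∘ₗ TensorProduct.map red (redPow εc ηc n) := by
    rw [← TensorProduct.map_comp, hDred, redPow_idem εc ηc hεη n]
  have v3 : TensorProduct.map D (redPow εc ηc n) Q1
      = TensorProduct.map D (redPow εc ηc n) (TensorProduct.map red (redPow εc ηc n) Q1) := by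
    conv_lhs => rw [e3]
    rfl
  have v4 : TensorProduct.map red (redPow εc ηc n) Q1 = 0 := hz
  calc @id (C ⊗[k] (C ⊗[k] tpowM k C n)) (redPow εc ηc (n+2) (iterDiag Δc εc (n+2) c))
      = @id (C ⊗[k] (C ⊗[k] tpowM k C n)) (redPow εc ηc (n+2)
          ((TensorProduct.assoc k C C (tpowM k C n)) (rTensor (tpowM k C n) Δc Q1))) := by
        rw [iterDiag_succ_succ Δc εc hco n c]
    _ = TensorProduct.map red (TensorProduct.map red (redPow εc ηc n))
          ((TensorProduct.assoc k C C (tpowM k C n)) (rTensor (tpowM k C n) Δc Q1)) := by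
        rfl
    _ = (TensorProduct.assoc k C C (tpowM k C n))
          (TensorProduct.map (TensorProduct.map red red) (redPow εc ηc n)
            (rTensor (tpowM k C n) Δc Q1)) := e1'
    _ = 0 := by rw [v2, v3, v4, map_zero, map_zero]

private lemma redPow_iterDiag_eta (hεη : εc (ηc 1) = 1) (hΔη : Δc (ηc 1) = ηc 1 ⊗ₜ[k] ηc 1)
    (n : ℕ) :
    redPow εc ηc (n+1) (iterDiag Δc εc (n+1) (ηc 1)) = 0 := by
  have h1 : iterDiag Δc εc (n+1) (ηc 1)
      = ηc 1 ⊗ₜ[k] iterDiag Δc εc n (ηc 1) := by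
    show lTensor C (iterDiag Δc εc n) (Δc (ηc 1)) = _
    rw [hΔη]; rfl
  have h2 : ((LinearMap.id : C →ₗ[k] C) - ηc ∘ₗ εc) (ηc 1) = 0 := by
    simp [LinearMap.sub_apply, hεη]
  show TensorProduct.map (LinearMap.id - ηc ∘ₗ εc) (redPow εc ηc n)
      (iterDiag Δc εc (n+1) (ηc 1)) = 0
  rw [h1, TensorProduct.map_tmul, h2, TensorProduct.zero_tmul]

end Aux3

section Aux4

open LinearMap TensorProduct

private lemma Q_event (SC : DgcData k C) (hCC : Cocomplete SC) (c : C) :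
    ∃ N, ∀ n, N ≤ n → redPow SC.ε SC.η n (iterDiag SC.Δ SC.ε n c) = 0 := by
  have base : ∃ m, redPow SC.ε SC.η (m+1) (iterDiag SC.Δ SC.ε (m+1) c) = 0 := by
    obtain ⟨n, hn⟩ := hCC (c + (1 - SC.ε c) • SC.η 1)
    match n, hn with
    | 0, hn =>
      have hε : SC.ε (c + (1 - SC.ε c) • SC.η 1) = 1 := by
        simp only [map_add, map_smul, SC.ε_η, smul_eq_mul, mul_one]
        ring
      have h10 : (1:k) = 0 := by
        have h0 : redPow SC.ε SC.η 0 (iterDiag SC.Δ SC.ε 0 (c + (1 - SC.ε c) • SC.η 1))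
            = SC.ε (c + (1 - SC.ε c) • SC.η 1) := rfl
        rw [h0, hε] at hn
        exact hn
      have hc0 : c = 0 := by
        calc c = (1:k) • c := (one_smul k c).symm
        _ = (0:k) • c := by rw [h10]
        _ = 0 := zero_smul k c
      exact ⟨0, by rw [hc0]; simp⟩
    | m+1, hn =>
      refine ⟨m, ?_⟩
      have hη := redPow_iterDiag_eta SC.Δ SC.ε SC.η SC.ε_η SC.Δ_η m
      have hsplit : redPow SC.ε SC.η (m+1) (iterDiag SC.Δ SC.ε (m+1) c)
            + (1 - SC.ε c) • redPow SC.ε SC.η (m+1) (iterDiag SC.Δ SC.ε (m+1) (SC.η 1))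
          = 0 := by
        simpa only [map_add, map_smul] using hn
      rw [hη, smul_zero, add_zero] at hsplit
      exact hsplit
  obtain ⟨m, hm⟩ := base
  have key : ∀ j, redPow SC.ε SC.η (m+1+j) (iterDiag SC.Δ SC.ε (m+1+j) c) = 0 := by
    intro j
    induction j with
    | zero => exact hm
    | succ i ih =>
      have hEq : m+1+i = (m+i)+1 := by omega
      rw [hEq] at ih
      have step := Q_mono SC.Δ SC.ε SC.η SC.coassoc SC.ε_η SC.Δ_η (m+i) c ih
      have hEq2 : m+1+(i+1) = (m+i)+2 := by omega
      rw [hEq2]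
      exact step
  refine ⟨m+1, fun n hn => ?_⟩
  have : n = m+1+(n-(m+1)) := by omega
  rw [this]
  exact key _

private lemma cupPow_event (SC : DgcData k C) (hCC : Cocomplete SC) (r : C →ₗ[k] A)
    (hr : r ∘ₗ (SC.η ∘ₗ SC.ε) = 0) (c : C) :
    ∃ N, ∀ n, N ≤ n → cupPow SC.Δ SC.ε r n c = 0 := by
  obtain ⟨N, hN⟩ := Q_event SC hCC c
  refine ⟨N, fun n hn => ?_⟩
  have hf := DFunLike.congr_fun (cupPow_factor SC.Δ SC.ε SC.η r hr n) c
  simp only [LinearMap.comp_apply] at hf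
  rw [hf, hN n hn, map_zero]

private lemma finsum_eval (F : ℕ → C →ₗ[k] A) (c : C) (N : ℕ)
    (hN : ∀ n, N ≤ n → F n c = 0) :
    ∑ᶠ n, F n c = ∑ n ∈ Finset.range N, F n c := by
  refine finsum_eq_sum_of_support_subset _ ?_
  intro n hn
  simp only [Function.mem_support, ne_eq] at hn
  exact Finset.mem_coe.mpr (Finset.mem_range.mpr
    (lt_of_not_ge fun hle => hn (hN n hle)))

private lemma deltaOp_mem (Δc : C →ₗ[k] C ⊗[k] C) (f : C →ₗ[k] A) (𝔞 : Submodule k A)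
    (hf : ∀ c a, f c * a ∈ 𝔞) (x : C ⊗[k] A) :
    deltaOp Δc f x ∈ LinearMap.range (lTensor C 𝔞.subtype) := by
  induction x using TensorProduct.induction_on with
  | zero => rw [map_zero]; exact Submodule.zero_mem _
  | tmul c a =>
    rw [deltaOp_tmul]
    generalize (TensorProduct.assoc k C C A) (Δc c ⊗ₜ[k] a) = w
    induction w using TensorProduct.induction_on with
    | zero => rw [map_zero]; exact Submodule.zero_mem _
    | tmul c' y =>
      have hy : (LinearMap.mul' k A ∘ₗ rTensor A f) y ∈ 𝔞 := by
        induction y using TensorProduct.induction_on with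
        | zero => simpa using Submodule.zero_mem 𝔞
        | tmul p a' => simpa using hf p a'
        | add u v hu hv => rw [map_add]; exact Submodule.add_mem _ hu hv
      exact ⟨c' ⊗ₜ[k] (⟨_, hy⟩ : 𝔞), by simp⟩
    | add u v hu hv => rw [map_add]; exact Submodule.add_mem _ hu hv
  | add u v hu hv => rw [map_add]; exact Submodule.add_mem _ hu hv

end Aux4

section Aux5

open LinearMap TensorProduct

private lemma cupPow_succ_right (SC : DgcData k C) (r : C →ₗ[k] A) :
    ∀ n, cup SC.Δ (cupPow SC.Δ SC.ε r n) r = cupPow SC.Δ SC.ε r (n+1)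
  | 0 => by
    show cup SC.Δ (unitHom SC.ε) r = cup SC.Δ r (cupPow SC.Δ SC.ε r 0)
    rw [cup_unit_left SC.Δ SC.ε SC.counit_left]
    show r = cup SC.Δ r (unitHom SC.ε)
    rw [cup_unit_right SC.Δ SC.ε SC.counit_right]
  | n+1 => by
    show cup SC.Δ (cup SC.Δ r (cupPow SC.Δ SC.ε r n)) r = _
    rw [cup_assoc SC.Δ SC.coassoc, cupPow_succ_right SC r n]
    rfl

end Aux5

/-- For an `𝔞`-trivial twisting cochain homotopy `h : t ≃ t'` over a
cocomplete dgc, the map `δ_h : C ⊗_{t'} A → C ⊗_t A` is an isomorphism of complexes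
(inverse `δ_{h⁻¹}` where `h⁻¹` is the cup-product inverse of `h`), and `δ_h` is
congruent to the identity modulo `C ⊗ 𝔞`. -/
theorem deltaOp_of_trivial_homotopy_iso
    (SC : DgcData k C) (SA : DgaData k A) (hCC : Cocomplete SC)
    (𝔞 : Submodule k A)
    (h𝔞l : ∀ (a x : A), x ∈ 𝔞 → a * x ∈ 𝔞)
    (h𝔞r : ∀ (a x : A), x ∈ 𝔞 → x * a ∈ 𝔞)
    (h𝔞d : ∀ x ∈ 𝔞, SA.d x ∈ 𝔞)
    (t t' h : C →ₗ[k] A)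
    (ht : IsTwCochain SC SA t) (ht' : IsTwCochain SC SA t')
    (hh : IsTwHomotopy SC SA t t' h)
    (htriv : ∀ c, h c - unitHom SC.ε c ∈ 𝔞)
    -- the tensor-product differential `d⊗` on `C ⊗ A`, characterized by the chain-map
    -- property of `f ↦ δ_f` for the degree-zero map `h`
    (dT : C ⊗[k] A →ₗ[k] C ⊗[k] A)
    (hdT_sq : dT ∘ₗ dT = 0)
    (hdT_delta : dT ∘ₗ deltaOp SC.Δ h - deltaOp SC.Δ h ∘ₗ dT
      = deltaOp SC.Δ (SA.d ∘ₗ h - h ∘ₗ SC.d)) :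
    ∃ g : C →ₗ[k] A,
      -- `g` is the cup-product inverse `h⁻¹` of `h`
      cup SC.Δ h g = unitHom SC.ε ∧ cup SC.Δ g h = unitHom SC.ε ∧
      -- `δ_h` is an isomorphism of `k`-modules with inverse `δ_{h⁻¹}`
      deltaOp SC.Δ h ∘ₗ deltaOp SC.Δ g = LinearMap.id ∧
      deltaOp SC.Δ g ∘ₗ deltaOp SC.Δ h = LinearMap.id ∧
      -- `δ_h` is a chain map `C ⊗_{t'} A → C ⊗_t A`
      (dT - deltaOp SC.Δ t) ∘ₗ deltaOp SC.Δ h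
        = deltaOp SC.Δ h ∘ₗ (dT - deltaOp SC.Δ t') ∧
      -- `δ_h` is congruent to the identity modulo `C ⊗ 𝔞`
      (∀ x : C ⊗[k] A,
        deltaOp SC.Δ h x - x ∈ LinearMap.range (LinearMap.lTensor C 𝔞.subtype)) := by
  classical
  obtain ⟨hh1, hh2, hh3⟩ := hh
  set r : C →ₗ[k] A := unitHom SC.ε - h with hr
  have hrη1 : r (SC.η 1) = 0 := by
    simp only [hr, LinearMap.sub_apply, unitHom, LinearMap.comp_apply,
      Algebra.linearMap_apply, SC.ε_η, map_one, hh3, sub_self]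
  have hrcomp : r ∘ₗ (SC.η ∘ₗ SC.ε) = 0 := by
    ext x
    have h1 : SC.η (SC.ε x) = SC.ε x • SC.η 1 := by rw [← map_smul, smul_eq_mul, mul_one]
    simp only [LinearMap.comp_apply, LinearMap.zero_apply, h1, map_smul, hrη1, smul_zero]
  have hev : ∀ c : C, ∃ N, ∀ n, N ≤ n → cupPow SC.Δ SC.ε r n c = 0 :=
    fun c => cupPow_event SC hCC r hrcomp c
  choose Nf hNf using hev
  set F : ℕ → C →ₗ[k] A := cupPow SC.Δ SC.ε r with hF
  let g : C →ₗ[k] A :=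
    { toFun := fun c => ∑ᶠ n, F n c
      map_add' := by
        intro c c'
        show (∑ᶠ n, F n (c + c')) = (∑ᶠ n, F n c) + ∑ᶠ n, F n c'
        have hN : ∀ n, max (Nf c) (Nf c') ≤ n → F n (c + c') = 0 := by
          intro n hn
          rw [map_add, hNf c n (le_trans (le_max_left _ _) hn),
            hNf c' n (le_trans (le_max_right _ _) hn), add_zero]
        rw [finsum_eval F (c+c') _ hN,
          finsum_eval F c (max (Nf c) (Nf c'))
            (fun n hn => hNf c n (le_trans (le_max_left _ _) hn)),
          finsum_eval F c' (max (Nf c) (Nf c'))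
            (fun n hn => hNf c' n (le_trans (le_max_right _ _) hn)),
          ← Finset.sum_add_distrib]
        exact Finset.sum_congr rfl fun n _ => map_add _ _ _
      map_smul' := by
        intro s c
        show (∑ᶠ n, F n (s • c)) = (RingHom.id k) s • ∑ᶠ n, F n c
        have hN : ∀ n, Nf c ≤ n → F n (s • c) = 0 := by
          intro n hn
          rw [map_smul, hNf c n hn, smul_zero]
        rw [RingHom.id_apply, finsum_eval F (s • c) _ hN, finsum_eval F c (Nf c) (hNf c),
          Finset.smul_sum]
        exact Finset.sum_congr rfl fun n _ => map_smul _ _ _ }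
  have hg_eval : ∀ (c : C) (N : ℕ), (∀ n, N ≤ n → F n c = 0) →
      g c = ∑ n ∈ Finset.range N, F n c := fun c N hN => finsum_eval F c N hN
  have key : ∀ c : C, cup SC.Δ r g c = g c - unitHom SC.ε c
           ∧ cup SC.Δ g r c = g c - unitHom SC.ε c := by
    intro c
    obtain ⟨S, hS⟩ := TensorProduct.exists_finset (SC.Δ c)
    obtain ⟨N, hN1, hN2, hN3⟩ : ∃ N, Nf c ≤ N ∧ (S.sup fun p => Nf p.1) ≤ N
        ∧ (S.sup fun p => Nf p.2) ≤ N :=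
      ⟨max (Nf c) (max (S.sup fun p => Nf p.1) (S.sup fun p => Nf p.2)),
        le_max_left _ _, le_trans (le_max_left _ _) (le_max_right _ _),
        le_trans (le_max_right _ _) (le_max_right _ _)⟩
    have hNc : ∀ n, N ≤ n → F n c = 0 := fun n hn => hNf c n (le_trans hN1 hn)
    have hNp2 : ∀ p ∈ S, ∀ n, N ≤ n → F n p.2 = 0 := by
      intro p hp n hn
      exact hNf p.2 n (le_trans (le_trans (Finset.le_sup (f := fun p => Nf p.2) hp) hN3) hn)
    have hNp1 : ∀ p ∈ S, ∀ n, N ≤ n → F n p.1 = 0 := by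
      intro p hp n hn
      exact hNf p.1 n (le_trans (le_trans (Finset.le_sup (f := fun p => Nf p.1) hp) hN2) hn)
    have gval2 : ∀ p ∈ S, g p.2 = ∑ n ∈ Finset.range N, F n p.2 :=
      fun p hp => hg_eval p.2 N (hNp2 p hp)
    have gval1 : ∀ p ∈ S, g p.1 = ∑ n ∈ Finset.range N, F n p.1 :=
      fun p hp => hg_eval p.1 N (hNp1 p hp)
    have expand : ∀ (u v : C →ₗ[k] A), cup SC.Δ u v c = ∑ p ∈ S, u p.1 * v p.2 := by
      intro u v
      show LinearMap.mul' k A (TensorProduct.map u v (SC.Δ c)) = _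
      rw [hS, map_sum, map_sum]
      exact Finset.sum_congr rfl fun p _ => by simp
    have tele : ∑ n ∈ Finset.range N, F (n+1) c = g c - unitHom SC.ε c := by
      have hsum := Finset.sum_range_succ' (fun m => F m c) N
      have hgN : g c = ∑ m ∈ Finset.range (N+1), F m c :=
        hg_eval c (N+1) (fun n hn => hNc n (by omega))
      have hF0 : F 0 c = unitHom SC.ε c := rfl
      rw [hgN, hsum, hF0]
      abel
    constructor
    · have e1 : cup SC.Δ r g c = ∑ n ∈ Finset.range N, cup SC.Δ r (F n) c := by
        rw [expand r g]
        have hstep : ∀ p ∈ S, r p.1 * g p.2 = ∑ n ∈ Finset.range N, r p.1 * F n p.2 := by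
          intro p hp; rw [gval2 p hp, Finset.mul_sum]
        rw [Finset.sum_congr rfl hstep, Finset.sum_comm]
        exact Finset.sum_congr rfl fun n _ => (expand r (F n)).symm
      have e1' : ∀ n, cup SC.Δ r (F n) c = F (n+1) c := fun n => rfl
      rw [e1, Finset.sum_congr rfl fun n _ => e1' n, tele]
    · have e2 : cup SC.Δ g r c = ∑ n ∈ Finset.range N, cup SC.Δ (F n) r c := by
        rw [expand g r]
        have hstep : ∀ p ∈ S, g p.1 * r p.2 = ∑ n ∈ Finset.range N, F n p.1 * r p.2 := by
          intro p hp; rw [gval1 p hp, Finset.sum_mul]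
        rw [Finset.sum_congr rfl hstep, Finset.sum_comm]
        exact Finset.sum_congr rfl fun n _ => (expand (F n) r).symm
      have e2' : ∀ n, cup SC.Δ (F n) r c = F (n+1) c := by
        intro n
        rw [cupPow_succ_right SC r n]
      rw [e2, Finset.sum_congr rfl fun n _ => e2' n, tele]
  have hhr : h = unitHom SC.ε - r := by rw [hr]; abel
  have hhg : cup SC.Δ h g = unitHom SC.ε := by
    ext c
    rw [hhr]
    have hsub := DFunLike.congr_fun (cup_sub_left SC.Δ (unitHom SC.ε) r g) c
    rw [hsub]
    have hu := DFunLike.congr_fun (cup_unit_left SC.Δ SC.ε SC.counit_left g) c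
    simp only [LinearMap.sub_apply]
    rw [hu, (key c).1]
    abel
  have hgh : cup SC.Δ g h = unitHom SC.ε := by
    ext c
    rw [hhr]
    have hsub := DFunLike.congr_fun (cup_sub_right SC.Δ g (unitHom SC.ε) r) c
    rw [hsub]
    have hu := DFunLike.congr_fun (cup_unit_right SC.Δ SC.ε SC.counit_right g) c
    simp only [LinearMap.sub_apply]
    rw [hu, (key c).2]
    abel
  refine ⟨g, hhg, hgh, ?_, ?_, ?_, ?_⟩
  · rw [← deltaOp_comp SC.Δ SC.coassoc h g, hhg,
      deltaOp_unit SC.Δ SC.ε SC.counit_right]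
  · rw [← deltaOp_comp SC.Δ SC.coassoc g h, hgh,
      deltaOp_unit SC.Δ SC.ε SC.counit_right]
  · have hcut : deltaOp SC.Δ (SA.d ∘ₗ h - h ∘ₗ SC.d)
        = deltaOp SC.Δ t ∘ₗ deltaOp SC.Δ h - deltaOp SC.Δ h ∘ₗ deltaOp SC.Δ t' := by
      rw [hh1, deltaOp_sub, deltaOp_comp SC.Δ SC.coassoc, deltaOp_comp SC.Δ SC.coassoc]
    have E := hdT_delta.trans hcut
    rw [LinearMap.sub_comp, LinearMap.comp_sub]
    exact sub_eq_sub_iff_sub_eq_sub.mp E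
  · intro x
    have hx : deltaOp SC.Δ h x - x = deltaOp SC.Δ (h - unitHom SC.ε) x := by
      rw [deltaOp_sub, deltaOp_unit SC.Δ SC.ε SC.counit_right]
      simp
    rw [hx]
    refine deltaOp_mem SC.Δ _ 𝔞 (fun c a => h𝔞r a _ ?_) x
    simpa using htriv c

end
end

section
/- Let A be an extended hga, X a simplicial set with A = C^*(X), and 𝔨 = 𝔨_X the ideal defined above (containing odd-degree elements, coboundaries, E_k-values for k ≥ 1, and F_{kl}-values for (k,l) ≠ (1,1)). Then modulo 𝔨 the ∪₂-product is both a left and a right derivation: α ∪₂ (βγ) ≡ (α ∪₂ β)γ + (−1)^{|α||β|} β(α ∪₂ γ) (mod 𝔨) and (αβ) ∪₂ γ ≡ (−1)^{|β||γ|}(α ∪₂ γ)β + α(β ∪₂ γ) (mod 𝔨); moreover α ∪₂ [β,γ] ≡ [α,β] ∪₂ γ ≡ 0 (mod 𝔨). -/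
/-!
STATEMENT 17: Let `A` be an extended hga (abstracting `C^*(X)` with its natural
extended hga structure) and `𝔨` the ideal defined from odd-degree elements,
coboundaries, `E_k`-values (`k ≥ 1`), `F_{kl}`-values with `(k,l) ≠ (1,1)`, and the
`∪₂`-generators.  Then modulo `𝔨` the `∪₂`-product is both a left and a right
derivation:
`α ∪₂ (βγ) ≡ (α ∪₂ β)γ + (-1)^{|α||β|} β(α ∪₂ γ)` and
`(αβ) ∪₂ γ ≡ (-1)^{|β||γ|}(α ∪₂ γ)β + α(β ∪₂ γ)` (mod `𝔨`); moreover
`α ∪₂ [β,γ] ≡ [α,β] ∪₂ γ ≡ 0 (mod 𝔨)`.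

-/

noncomputable section

/-- The sign `(-1)^p` for `p : ℤ`, as an element of `k`. -/
def sgn (k : Type) [CommRing k] (p : ℤ) : k := if Even p then 1 else -1

/-- An augmented graded dga: a `k`-algebra with a homogeneity predicate `hom a p`
("`a` is homogeneous of degree `p`"), a square-zero differential of degree `+1`
satisfying the graded Leibniz rule, and an augmentation. -/
structure GradedDGA (k A : Type) [CommRing k] [Ring A] [Algebra k A] where
  d : A →ₗ[k] A
  ε : A →ₗ[k] k
  hom : A → ℤ → Prop
  hom_zero : ∀ p, hom 0 p
  hom_one : hom 1 0
  hom_add : ∀ {a b p}, hom a p → hom b p → hom (a + b) p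
  hom_smul : ∀ (c : k) {a p}, hom a p → hom (c • a) p
  hom_mul : ∀ {a b p q}, hom a p → hom b q → hom (a * b) (p + q)
  hom_d : ∀ {a p}, hom a p → hom (d a) (p + 1)
  d_sq : ∀ a, d (d a) = 0
  leibniz : ∀ {a : A} (b : A) {p}, hom a p →
      d (a * b) = d a * b + sgn k p • (a * d b)
  ε_one : ε 1 = 1
  ε_mul : ∀ a b, ε (a * b) = ε a * ε b
  ε_d : ∀ a, ε (d a) = 0

namespace GradedDGA

variable {k A : Type} [CommRing k] [Ring A] [Algebra k A]

/-- Replace the `j`-th entry of `l` by its differential. -/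
def dAt (S : GradedDGA k A) (l : List A) (j : ℕ) : List A :=
  l.take j ++ S.d (l.getD j 0) :: l.drop (j + 1)

/-- Multiply the entries of `l` at positions `m-1` and `m`. -/
def mulAt (l : List A) (m : ℕ) : List A :=
  l.take (m - 1) ++ (l.getD (m - 1) 0 * l.getD m 0) :: l.drop (m + 1)

end GradedDGA

/-- A homotopy Gerstenhaber algebra: an augmented graded dga with brace operations
`E_k(a; b₁, …, b_k)`, encoded as `E a [b₁, …, b_k]` (so `E₀ = 1_A`), which are
multilinear, vanish when an argument is the unit, take values in the augmentation
ideal, and satisfy the hga differential and product formulas with explicit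
Koszul signs. -/
structure HGAlg (k A : Type) [CommRing k] [Ring A] [Algebra k A]
    extends GradedDGA k A where
  E : A → List A → A
  E_nil : ∀ a, E a [] = a
  E_one_left : ∀ l, l ≠ [] → E 1 l = 0
  E_one_arg : ∀ a l₁ l₂, E a (l₁ ++ (1 : A) :: l₂) = 0
  E_aug : ∀ a l, l ≠ [] → ε (E a l) = 0
  E_add_left : ∀ a b l, E (a + b) l = E a l + E b l
  E_smul_left : ∀ (c : k) a l, E (c • a) l = c • E a l
  E_add_arg : ∀ a l₁ l₂ x y,
      E a (l₁ ++ (x + y) :: l₂) = E a (l₁ ++ x :: l₂) + E a (l₁ ++ y :: l₂)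
  E_smul_arg : ∀ (c : k) a l₁ l₂ x,
      E a (l₁ ++ (c • x) :: l₂) = c • E a (l₁ ++ x :: l₂)
  E_hom : ∀ (a : A) (p : ℤ) (l : List A) (q : List ℤ), l.length = q.length →
      hom a p → (∀ i < l.length, hom (l.getD i 0) (q.getD i 0)) →
      hom (E a l) (p + q.sum - l.length)
  /-- The differential formula
  `d(E_k)(a; b₁,…,b_k) = ±b₁ E_{k-1}(a; b₂,…) + Σ ± E_{k-1}(a; …, b_m b_{m+1}, …)
  + ± E_{k-1}(a; b₁,…,b_{k-1}) b_k`, with Koszul signs made explicit. -/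
  E_d : ∀ (a : A) (p : ℤ) (l : List A) (q : List ℤ), l ≠ [] →
      l.length = q.length → hom a p →
      (∀ i < l.length, hom (l.getD i 0) (q.getD i 0)) →
      d (E a l) - sgn k (l.length : ℤ) • E (d a) l
        - sgn k (l.length : ℤ) •
            ∑ j ∈ Finset.range l.length,
              sgn k (p + (q.take j).sum) • E a (toGradedDGA.dAt l j)
      = sgn k ((q.getD 0 0) * (p + (l.length : ℤ) - 1)) • (l.getD 0 0 * E a l.tail)
        + (∑ m ∈ Finset.Ioo 0 l.length, sgn k (m : ℤ) • E a (GradedDGA.mulAt l m))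
        + sgn k (l.length : ℤ) •
            (E a (l.take (l.length - 1)) * l.getD (l.length - 1) 0)
  /-- The product formula
  `E_k(a₁ a₂; b₁,…,b_k) = Σ_{k₁+k₂=k} ± E_{k₁}(a₁; b₁,…,b_{k₁}) E_{k₂}(a₂; b_{k₁+1},…)`,
  with Koszul signs made explicit. -/
  E_mul : ∀ (a₁ a₂ : A) (p₁ p₂ : ℤ) (l : List A) (q : List ℤ),
      l.length = q.length → hom a₁ p₁ → hom a₂ p₂ →
      (∀ i < l.length, hom (l.getD i 0) (q.getD i 0)) →
      E (a₁ * a₂) l = ∑ m ∈ Finset.range (l.length + 1),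
        sgn k (((l.length : ℤ) - m) * (p₁ + (q.take m).sum) + p₂ * (q.take m).sum) •
          (E a₁ (l.take m) * E a₂ (l.drop m))

namespace HGAlg

variable {k A : Type} [CommRing k] [Ring A] [Algebra k A]

/-- The cup-one product `a ∪₁ b = -E₁(a; b)`. -/
def cupOne (S : HGAlg k A) (a b : A) : A := - S.E a [b]

end HGAlg

/-- An extended homotopy Gerstenhaber algebra: an hga with additional operations
`F_{kl}(a₁,…,a_k; b₁,…,b_l)` of degree `-(k+l)`, encoded as `F l₁ l₂`. -/
structure ExtHGAlg (k A : Type) [CommRing k] [Ring A] [Algebra k A]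
    extends HGAlg k A where
  F : List A → List A → A
  F_nil_left : ∀ l, F [] l = 0
  F_nil_right : ∀ l, F l [] = 0
  F_one_left : ∀ l₁ l₂ l, F (l₁ ++ (1 : A) :: l₂) l = 0
  F_one_right : ∀ l l₁ l₂, F l (l₁ ++ (1 : A) :: l₂) = 0
  F_aug : ∀ l₁ l₂, l₁ ≠ [] → l₂ ≠ [] → ε (F l₁ l₂) = 0
  F_add_left : ∀ l₁ l₂ x y l,
      F (l₁ ++ (x + y) :: l₂) l = F (l₁ ++ x :: l₂) l + F (l₁ ++ y :: l₂) l
  F_smul_left : ∀ (c : k) l₁ l₂ x l,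
      F (l₁ ++ (c • x) :: l₂) l = c • F (l₁ ++ x :: l₂) l
  F_add_right : ∀ l l₁ l₂ x y,
      F l (l₁ ++ (x + y) :: l₂) = F l (l₁ ++ x :: l₂) + F l (l₁ ++ y :: l₂)
  F_smul_right : ∀ (c : k) l l₁ l₂ x,
      F l (l₁ ++ (c • x) :: l₂) = c • F l (l₁ ++ x :: l₂)
  F_hom : ∀ (l₁ l₂ : List A) (p₁ p₂ : List ℤ),
      l₁.length = p₁.length → l₂.length = p₂.length →
      (∀ i < l₁.length, hom (l₁.getD i 0) (p₁.getD i 0)) →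
      (∀ i < l₂.length, hom (l₂.getD i 0) (p₂.getD i 0)) →
      hom (F l₁ l₂) (p₁.sum + p₂.sum - l₁.length - l₂.length)
  /-- The `(1,1)`-case of the differential formula for the `F`-operations:
  `d(F₁₁)(a;b) = E₁(a;b) + (-1)^{|a||b|} E₁(b;a)`. -/
  F_d11 : ∀ (a b : A) (p q : ℤ), hom a p → hom b q →
      d (F [a] [b]) - F [d a] [b] - sgn k p • F [a] [d b]
        = E a [b] + sgn k (p * q) • E b [a]
  /-- The `(1,2)`-case of the differential formula for the `F`-operations. -/
  F_d12 : ∀ (a b c : A) (p q r : ℤ), hom a p → hom b q → hom c r →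
      d (F [a] [b, c]) + F [d a] [b, c] + sgn k p • F [a] [d b, c]
          + sgn k (p + q) • F [a] [b, d c]
        = E a [b, c] - sgn k (p * q) • (b * F [a] [c]) + F [a] [b * c]
          - F [a] [b] * c
  /-- The `(2,1)`-case of the differential formula for the `F`-operations. -/
  F_d21 : ∀ (a b c : A) (p q r : ℤ), hom a p → hom b q → hom c r →
      d (F [a, b] [c]) + F [d a, b] [c] + sgn k p • F [a, d b] [c]
          + sgn k (p + q) • F [a, b] [d c]
        = a * F [b] [c] - F [a * b] [c] + sgn k (q * r) • (F [a] [c] * b)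
          - sgn k (r * (p + q)) • E c [a, b]

namespace ExtHGAlg

variable {k A : Type} [CommRing k] [Ring A] [Algebra k A]

/-- The cup-two product `a ∪₂ b = -F₁₁(a; b)`. -/
def cupTwo (S : ExtHGAlg k A) (a b : A) : A := - S.F [a] [b]

end ExtHGAlg

/-- The iterated `∪₁`-product `U_k(b₀,…,b_k)`, with `U₀(b₀) = b₀` and
`U_k(b₀,…,b_k) = -U_{k-1}(b₀,…,b_{k-1}) ∪₁ b_k`. -/
def iterCupOne {k A : Type} [CommRing k] [Ring A] [Algebra k A]
    (S : HGAlg k A) : List A → A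
  | [] => 0
  | b :: rest => rest.foldl (fun acc x => - S.cupOne acc x) b

/-- The generators of the ideal `𝔨`: odd-degree elements, coboundaries, `E_k`-values
(`k ≥ 1`), `F_{kl}`-values with `(k,l) ≠ (1,1)`, elements `a ∪₂ E_k(b;c₁,…,c_k)` with
`k ≥ 2`, and elements `a ∪₂ U_k(b₀,…,b_k)` with `a` and the `b_i` cocycles. -/
def kgen {k A : Type} [CommRing k] [Ring A] [Algebra k A] (S : ExtHGAlg k A) : Set A :=
  {x | ∃ p, Odd p ∧ S.hom x p} ∪
  {x | ∃ y, x = S.d y} ∪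
  {x | ∃ a l, l ≠ [] ∧ x = S.E a l} ∪
  {x | ∃ l₁ l₂, l₁ ≠ [] ∧ l₂ ≠ [] ∧ ¬(l₁.length = 1 ∧ l₂.length = 1) ∧
    x = S.F l₁ l₂} ∪
  {x | ∃ a b l, 2 ≤ l.length ∧ x = S.cupTwo a (S.E b l)} ∪
  {x | ∃ (a : A) (l : List A), l ≠ [] ∧ S.d a = 0 ∧ (∀ y ∈ l, S.d y = 0) ∧
    x = S.cupTwo a (iterCupOne S.toHGAlg l)}

/-- The two-sided ideal `𝔨` generated by `kgen`, realized as the `k`-span of all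
products `a · g · b` with `g` a generator. -/
def kIdeal {k A : Type} [CommRing k] [Ring A] [Algebra k A] (S : ExtHGAlg k A) :
    Submodule k A :=
  Submodule.span k {x | ∃ (a b : A) (g : A), g ∈ kgen S ∧ x = a * g * b}

/-!
Modulo `𝔨` the differential formulas for `F₁₂` and `F₂₁` say exactly that `∪₂ = -F₁₁` is a
left and a right derivation, since the coboundary of an `F`-value, the `F`-values of type
`(1,2)` and `(2,1)`, and the `E₂`-term all lie in `𝔨`. The formula `d(∪₁)(α;β) = [α,β]` puts
graded commutators in `𝔨`, so the quotient is graded commutative; expanding `α ∪₂ [β,γ]`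
and `[α,β] ∪₂ γ` by the derivation rules then leaves terms that cancel in pairs up to
reordering a product.
-/

lemma sgn_add (k : Type) [CommRing k] (m n : ℤ) : sgn k (m + n) = sgn k m * sgn k n := by
  by_cases hm : Even m <;> by_cases hn : Even n <;> simp [sgn, Int.even_add, hm, hn]

lemma sgn_of_even (k : Type) [CommRing k] {n : ℤ} (h : Even n) : sgn k n = 1 :=
  if_pos h

lemma sgn_one (k : Type) [CommRing k] : sgn k 1 = -1 := by
  simp [sgn]

lemma sgn_mul_self (k : Type) [CommRing k] (n : ℤ) : sgn k n * sgn k n = 1 := by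
  rw [← sgn_add, ← two_mul, sgn_of_even k (even_two_mul n)]

lemma sgn_add_sub_two_mul (k : Type) [CommRing k] (m n r : ℤ) :
    sgn k ((m + n - 2) * r) = sgn k (m * r) * sgn k (n * r) := by
  rw [show (m + n - 2) * r = m * r + n * r + 2 * -r by ring, sgn_add, sgn_add,
    sgn_of_even k (even_two_mul _), mul_one]

namespace ExtHGAlg

variable {k A : Type} [CommRing k] [Ring A] [Algebra k A] (S : ExtHGAlg k A)

lemma cupTwo_add_left (a b c : A) : S.cupTwo (a + b) c = S.cupTwo a c + S.cupTwo b c := by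
  have h := S.F_add_left [] [] a b [c]
  simp only [List.nil_append] at h
  rw [cupTwo, cupTwo, cupTwo, h, neg_add]

lemma cupTwo_smul_left (e : k) (a c : A) : S.cupTwo (e • a) c = e • S.cupTwo a c := by
  simp only [cupTwo, smul_neg]
  exact congrArg Neg.neg (S.F_smul_left e [] [] a [c])

lemma cupTwo_add_right (a b c : A) : S.cupTwo a (b + c) = S.cupTwo a b + S.cupTwo a c := by
  have h := S.F_add_right [a] [] [] b c
  simp only [List.nil_append] at h
  rw [cupTwo, cupTwo, cupTwo, h, neg_add]

lemma cupTwo_smul_right (e : k) (a b : A) : S.cupTwo a (e • b) = e • S.cupTwo a b := by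
  simp only [cupTwo, smul_neg]
  exact congrArg Neg.neg (S.F_smul_right e [a] [] [] b)

lemma cupTwo_sub_left (a b c : A) : S.cupTwo (a - b) c = S.cupTwo a c - S.cupTwo b c := by
  rw [sub_eq_add_neg, ← neg_one_smul k b, cupTwo_add_left, cupTwo_smul_left, neg_one_smul,
    ← sub_eq_add_neg]

lemma cupTwo_sub_right (a b c : A) : S.cupTwo a (b - c) = S.cupTwo a b - S.cupTwo a c := by
  rw [sub_eq_add_neg, ← neg_one_smul k c, cupTwo_add_right, cupTwo_smul_right, neg_one_smul,
    ← sub_eq_add_neg]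

lemma hom_cupTwo {a b : A} {p q : ℤ} (ha : S.hom a p) (hb : S.hom b q) :
    S.hom (S.cupTwo a b) (p + q - 2) := by
  have hF := S.F_hom [a] [b] [p] [q] rfl rfl (by simpa using ha) (by simpa using hb)
  simp only [List.sum_singleton, List.length_singleton, Nat.cast_one] at hF
  rw [cupTwo, ← neg_one_smul k, show p + q - 2 = p + q - 1 - 1 by ring]
  exact S.hom_smul (-1) hF

end ExtHGAlg

namespace kIdeal

variable {k A : Type} [CommRing k] [Ring A] [Algebra k A] (S : ExtHGAlg k A)

lemma subset : kgen S ⊆ kIdeal S :=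
  fun g hg => Submodule.subset_span ⟨1, 1, g, hg, by rw [one_mul, mul_one]⟩

lemma d_mem (y : A) : S.d y ∈ kIdeal S :=
  subset S (.inl (.inl (.inl (.inl (.inr ⟨y, rfl⟩)))))

lemma E_mem (a : A) {l : List A} (hl : l ≠ []) : S.E a l ∈ kIdeal S :=
  subset S (.inl (.inl (.inl (.inr ⟨a, l, hl, rfl⟩))))

lemma F_mem {l₁ l₂ : List A} (h₁ : l₁ ≠ []) (h₂ : l₂ ≠ [])
    (h : ¬(l₁.length = 1 ∧ l₂.length = 1)) : S.F l₁ l₂ ∈ kIdeal S :=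
  subset S (.inl (.inl (.inr ⟨l₁, l₂, h₁, h₂, h, rfl⟩)))

lemma F_one_two_mem (a b c : A) : S.F [a] [b, c] ∈ kIdeal S :=
  F_mem S (by simp) (by simp) (by simp)

lemma F_two_one_mem (a b c : A) : S.F [a, b] [c] ∈ kIdeal S :=
  F_mem S (by simp) (by simp) (by simp)

/-- `d(∪₁)(x; y) = [x, y]`, and the other terms of that formula are `E₁`-values. -/
lemma gradedCommutator_mem {x y : A} {px py : ℤ} (hx : S.hom x px) (hy : S.hom y py) :
    x * y - sgn k (px * py) • (y * x) ∈ kIdeal S := by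
  have hE := S.E_d x px [y] [py] (by simp) rfl hx (by simpa using hy)
  have hIoo : Finset.Ioo 0 1 = (∅ : Finset ℕ) := rfl
  simp only [List.length_singleton, Nat.cast_one, sgn_one, neg_smul, one_smul, sub_neg_eq_add,
    Finset.range_one, Finset.sum_singleton, GradedDGA.dAt, List.take_zero, List.sum_nil, add_zero,
    List.getD_cons_zero, List.drop_succ_cons, List.drop_nil, List.nil_append,
    add_sub_cancel_right, List.tail_cons, S.E_nil, tsub_self, hIoo, Finset.sum_empty] at hE
  have hxy : x * y - sgn k (px * py) • (y * x)
      = -S.d (S.E x [y]) - S.E (S.d x) [y] - sgn k px • S.E x [S.d y] := by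
    rw [mul_comm px py]
    linear_combination (norm := module) hE
  rw [hxy]
  exact sub_mem (sub_mem (neg_mem (d_mem S _)) (E_mem S _ (List.cons_ne_nil _ _)))
    (Submodule.smul_mem _ _ (E_mem S _ (List.cons_ne_nil _ _)))

lemma cupTwo_leftDerivation_mem {a b c : A} {p q r : ℤ}
    (ha : S.hom a p) (hb : S.hom b q) (hc : S.hom c r) :
    S.cupTwo a (b * c) - (S.cupTwo a b * c + sgn k (p * q) • (b * S.cupTwo a c)) ∈ kIdeal S := by
  have hF := S.F_d12 a b c p q r ha hb hc
  have h : S.cupTwo a (b * c) - (S.cupTwo a b * c + sgn k (p * q) • (b * S.cupTwo a c))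
      = S.E a [b, c] - (S.d (S.F [a] [b, c]) + S.F [S.d a] [b, c]
          + sgn k p • S.F [a] [S.d b, c] + sgn k (p + q) • S.F [a] [b, S.d c]) := by
    simp only [ExtHGAlg.cupTwo, neg_mul, mul_neg]
    linear_combination (norm := module) hF
  rw [h]
  exact sub_mem (E_mem S _ (List.cons_ne_nil _ _))
    (add_mem (add_mem (add_mem (d_mem S _) (F_one_two_mem S _ _ _))
      (Submodule.smul_mem _ _ (F_one_two_mem S _ _ _)))
      (Submodule.smul_mem _ _ (F_one_two_mem S _ _ _)))

lemma cupTwo_rightDerivation_mem {a b c : A} {p q r : ℤ}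
    (ha : S.hom a p) (hb : S.hom b q) (hc : S.hom c r) :
    S.cupTwo (a * b) c - (sgn k (q * r) • (S.cupTwo a c * b) + a * S.cupTwo b c) ∈ kIdeal S := by
  have hF := S.F_d21 a b c p q r ha hb hc
  have h : S.cupTwo (a * b) c - (sgn k (q * r) • (S.cupTwo a c * b) + a * S.cupTwo b c)
      = (S.d (S.F [a, b] [c]) + S.F [S.d a, b] [c]
          + sgn k p • S.F [a, S.d b] [c] + sgn k (p + q) • S.F [a, b] [S.d c])
        + sgn k (r * (p + q)) • S.E c [a, b] := by
    simp only [ExtHGAlg.cupTwo, neg_mul, mul_neg]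
    linear_combination (norm := module) -hF
  rw [h]
  exact add_mem
    (add_mem (add_mem (add_mem (d_mem S _) (F_two_one_mem S _ _ _))
      (Submodule.smul_mem _ _ (F_two_one_mem S _ _ _)))
      (Submodule.smul_mem _ _ (F_two_one_mem S _ _ _)))
    (Submodule.smul_mem _ _ (E_mem S _ (List.cons_ne_nil _ _)))

open Submodule.Quotient in
lemma cupTwo_gradedCommutator_right_mem {a b c : A} {p q r : ℤ}
    (ha : S.hom a p) (hb : S.hom b q) (hc : S.hom c r) :
    S.cupTwo a (b * c - sgn k (q * r) • (c * b)) ∈ kIdeal S := by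
  have hbc := (Submodule.Quotient.eq _).mpr (cupTwo_leftDerivation_mem S ha hb hc)
  have hcb := (Submodule.Quotient.eq _).mpr (cupTwo_leftDerivation_mem S ha hc hb)
  have hab_c := (Submodule.Quotient.eq _).mpr
    (gradedCommutator_mem S (S.hom_cupTwo ha hb) hc)
  have hb_ac := (Submodule.Quotient.eq _).mpr
    (gradedCommutator_mem S hb (S.hom_cupTwo ha hc))
  rw [sgn_add_sub_two_mul] at hab_c
  rw [mul_comm, sgn_add_sub_two_mul, mul_comm r] at hb_ac
  simp only [mk_add, mk_smul] at hbc hcb hab_c hb_ac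
  rw [← mk_eq_zero, S.cupTwo_sub_right, S.cupTwo_smul_right, mk_sub, mk_smul]
  linear_combination (norm := module) hbc - sgn k (q * r) • hcb + hab_c + sgn k (p * q) • hb_ac
    + (sgn k (q * r) • (sgn_mul_self k (p * q))) • (mk (S.cupTwo a c * b) : A ⧸ kIdeal S)

open Submodule.Quotient in
lemma cupTwo_gradedCommutator_left_mem {a b c : A} {p q r : ℤ}
    (ha : S.hom a p) (hb : S.hom b q) (hc : S.hom c r) :
    S.cupTwo (a * b - sgn k (p * q) • (b * a)) c ∈ kIdeal S := by
  have hab := (Submodule.Quotient.eq _).mpr (cupTwo_rightDerivation_mem S ha hb hc)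
  have hba := (Submodule.Quotient.eq _).mpr (cupTwo_rightDerivation_mem S hb ha hc)
  have hac_b := (Submodule.Quotient.eq _).mpr
    (gradedCommutator_mem S (S.hom_cupTwo ha hc) hb)
  have ha_bc := (Submodule.Quotient.eq _).mpr
    (gradedCommutator_mem S ha (S.hom_cupTwo hb hc))
  rw [sgn_add_sub_two_mul, mul_comm r] at hac_b
  rw [mul_comm, sgn_add_sub_two_mul, mul_comm q, mul_comm r] at ha_bc
  simp only [mk_add, mk_smul] at hab hba hac_b ha_bc
  rw [← mk_eq_zero, S.cupTwo_sub_left, S.cupTwo_smul_left, mk_sub, mk_smul]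
  linear_combination (norm := module) hab - sgn k (p * q) • hba + sgn k (q * r) • hac_b + ha_bc
    + (sgn k (p * q) • (sgn_mul_self k (q * r))) • (mk (b * S.cupTwo a c) : A ⧸ kIdeal S)

end kIdeal

/-- Modulo `𝔨`, the `∪₂`-product is a left and a right derivation,
and `∪₂`-products with a graded commutator in either slot vanish. -/
theorem cupTwo_derivation_mod_kIdeal
    {k A : Type} [CommRing k] [Ring A] [Algebra k A] (S : ExtHGAlg k A)
    (a b c : A) (p q r : ℤ) (ha : S.hom a p) (hb : S.hom b q) (hc : S.hom c r) :
    -- `∪₂` is a left derivation modulo `𝔨`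
    (S.cupTwo a (b * c)
      - (S.cupTwo a b * c + sgn k (p * q) • (b * S.cupTwo a c)) ∈ kIdeal S) ∧
    -- `∪₂` is a right derivation modulo `𝔨`
    (S.cupTwo (a * b) c
      - (sgn k (q * r) • (S.cupTwo a c * b) + a * S.cupTwo b c) ∈ kIdeal S) ∧
    -- `α ∪₂ [β,γ] ≡ 0 (mod 𝔨)`
    (S.cupTwo a (b * c - sgn k (q * r) • (c * b)) ∈ kIdeal S) ∧
    -- `[α,β] ∪₂ γ ≡ 0 (mod 𝔨)`
    (S.cupTwo (a * b - sgn k (p * q) • (b * a)) c ∈ kIdeal S) :=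
  ⟨kIdeal.cupTwo_leftDerivation_mem S ha hb hc, kIdeal.cupTwo_rightDerivation_mem S ha hb hc,
    kIdeal.cupTwo_gradedCommutator_right_mem S ha hb hc,
    kIdeal.cupTwo_gradedCommutator_left_mem S ha hb hc⟩

end
end
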